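/- The one-step successor set of a single term under an XACU+ parametrized rewrite system is a hedge-automaton language: for every HA A, PTRS R/A in XACU+, and ground term t, the set { u ∈ T(Σ) | t →_{R/A} u } is recognizable by a hedge automaton. -/

import Mathlib

/-- Unranked terms over an alphabet `α`: a node labeled by a symbol of `α`
with a hedge (finite list) of subterms. -/
inductive UTerm (α : Type) : Type
  | node : α → List (UTerm α) → UTerm α

/-- A hedge automaton: transitions `a(L) → q` with `L ⊆ Q*` a regular word language. -/
structure HA (α Q : Type) where
  final : Set Q
  trans : List (α × Language Q × Q)
  regular : ∀ r ∈ trans, r.2.1.IsRegular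

/-- Bottom-up reduction of a term to a state. -/
inductive HA.Reduce {α Q : Type} (A : HA α Q) : UTerm α → Q → Prop
  | node {a : α} {ts : List (UTerm α)} {qs : List Q} {L : Language Q} {q : Q} :
      (a, L, q) ∈ A.trans → qs ∈ L → ts.length = qs.length →
      (∀ p ∈ List.zip ts qs, A.Reduce p.1 p.2) →
      A.Reduce (UTerm.node a ts) q

/-- Language of terms accepted by a hedge automaton. -/
def HA.lang {α Q : Type} (A : HA α Q) : Set (UTerm α) :=
  { t | ∃ q ∈ A.final, A.Reduce t q }

/-- A set of terms is a hedge-automaton language. -/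
def IsHALang {α : Type} (L : Set (UTerm α)) : Prop :=
  ∃ (Q : Type) (_ : Fintype Q) (A : HA α Q), A.lang = L

/-- XACU+ update rules parametrized by states of an HA `A`: renaming
`a(x) → b(x)`, (renaming) insertions `a(x) → b(p x)`, `a(x) → b(x p)`,
`a(xy) → a(x p y)`, `a(x) → p a(x)`, `a(x) → a(x) p`, generalized replacement
`a(x) → p₁…pₙ` (subsuming replacement `n = 1` and deletion `n = 0`), and
single-node deletion `a(x) → x`. -/
inductive XPRule (α Q : Type)
  | ren (a b : α)
  | insFirst (a b : α) (p : Q)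
  | insLast (a b : α) (p : Q)
  | insInto (a : α) (p : Q)
  | insLeft (a : α) (p : Q)
  | insRight (a : α) (p : Q)
  | rpl (a : α) (ps : List Q)
  | delS (a : α)

/-- Top-level application of one XACU+ rule, parameters `p` instantiated by
arbitrary terms of `L(A, p)`. -/
inductive XPStep {α Q : Type} (A : HA α Q) :
    XPRule α Q → List (UTerm α) → List (UTerm α) → Prop
  | ren {a b h} : XPStep A (.ren a b) [UTerm.node a h] [UTerm.node b h]
  | insFirst {a b p t h} : A.Reduce t p →
      XPStep A (.insFirst a b p) [UTerm.node a h] [UTerm.node b (t :: h)]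
  | insLast {a b p t h} : A.Reduce t p →
      XPStep A (.insLast a b p) [UTerm.node a h] [UTerm.node b (h ++ [t])]
  | insInto {a p t x y} : A.Reduce t p →
      XPStep A (.insInto a p) [UTerm.node a (x ++ y)] [UTerm.node a (x ++ t :: y)]
  | insLeft {a p t h} : A.Reduce t p →
      XPStep A (.insLeft a p) [UTerm.node a h] [t, UTerm.node a h]
  | insRight {a p t h} : A.Reduce t p →
      XPStep A (.insRight a p) [UTerm.node a h] [UTerm.node a h, t]
  | rpl {a ps ts h} : ts.length = List.length ps →
      (∀ pr ∈ List.zip ts ps, A.Reduce pr.1 pr.2) →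
      XPStep A (.rpl a ps) [UTerm.node a h] ts
  | delS {a h} : XPStep A (.delS a) [UTerm.node a h] h

/-- One rewrite step of a set of XACU+ rules at an arbitrary position. -/
inductive XPRw {α Q : Type} (A : HA α Q) (R : List (XPRule α Q)) :
    List (UTerm α) → List (UTerm α) → Prop
  | base {r h h'} : r ∈ R → XPStep A r h h' → XPRw A R h h'
  | context {u v h h'} : XPRw A R h h' → XPRw A R (u ++ h ++ v) (u ++ h' ++ v)
  | under {f h h'} : XPRw A R h h' → XPRw A R [UTerm.node f h] [UTerm.node f h']

/-- Forward reachability set (on terms) under XACU+ rewriting. -/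
def XPPost {α Q : Type} (A : HA α Q) (R : List (XPRule α Q))
    (L : Set (UTerm α)) : Set (UTerm α) :=
  { u | ∃ t ∈ L, Relation.ReflTransGen (fun x y => XPRw A R [x] [y]) t u }

/-- Backward reachability set (on terms) under XACU+ rewriting. -/
def XPPre {α Q : Type} (A : HA α Q) (R : List (XPRule α Q))
    (L : Set (UTerm α)) : Set (UTerm α) :=
  { t | ∃ u ∈ L, Relation.ReflTransGen (fun x y => XPRw A R [x] [y]) t u }

/-!
A one-step successor of `t` replaces a single subterm occurrence of `t` by an instance of a
right-hand side, so it is an instance of one of finitely many *patterns*: terms over `α ⊕ P`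
obtained from `t` by performing the rewrite step symbolically, a leaf `p : P` standing for an
arbitrary term of `L(A, p)`. A finite set of patterns is recognised by a hedge automaton whose
states are the states of `A` (reading the parameter positions) together with one state per
subpattern (checking the rest of the pattern).
-/

theorem Language.mem_map_iff {β γ : Type*} (f : β → γ) (L : Language β) (w : List γ) :
    w ∈ Language.map f L ↔ ∃ v ∈ L, List.map f v = w := Iff.rfl

theorem Language.IsRegular.map {β γ : Type*} {L : Language β} (hL : L.IsRegular)
    {f : β → γ} (hf : Function.Injective f) : (Language.map f L).IsRegular := by
  -- Myhill–Nerode: each left quotient of the image is empty or the image of a left quotient.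
  refine .of_finite_range_leftQuotient <| ((hL.finite_range_leftQuotient.image
    (Language.map f)).insert 0).subset <| Set.range_subset_iff.2 fun x => ?_
  by_cases hx : ∃ v, List.map f v = x
  · obtain ⟨v, rfl⟩ := hx
    refine Or.inr ⟨_, ⟨v, rfl⟩, Language.ext fun y => ?_⟩
    simp only [Language.mem_map_iff, Language.mem_leftQuotient, List.map_eq_append_iff]
    constructor
    · rintro ⟨z, hz, rfl⟩
      exact ⟨_, hz, _, _, rfl, rfl, rfl⟩
    · rintro ⟨z, hz, z₁, z₂, rfl, hz₁, rfl⟩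
      exact ⟨_, by rwa [List.map_injective_iff.2 hf hz₁] at hz, rfl⟩
  · refine Or.inl (Language.ext fun y => iff_of_false (fun ⟨z, _, hz⟩ => hx ?_) id)
    obtain ⟨z₁, -, -, hz₁, -⟩ := List.map_eq_append_iff.1 hz
    exact ⟨z₁, hz₁⟩

theorem Language.isRegular_setOf_map_eq {β γ : Type*} (f : γ → β) (ks : List β) :
    Language.IsRegular ({qs | qs.map f = ks} : Language γ) := by
  -- Myhill–Nerode: the left quotients are empty or the same languages for suffixes of `ks`.
  refine .of_finite_range_leftQuotient ?_
  induction ks with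
  | nil =>
    refine (Set.toFinite {0, 1}).subset (Set.range_subset_iff.2 fun x => ?_)
    rcases x with _ | ⟨q, x⟩
    · exact Or.inr (Language.ext fun y => List.map_eq_nil_iff)
    · exact Or.inl (Language.ext fun y => iff_of_false (List.cons_ne_nil _ _) id)
  | cons k ks ih =>
    refine ((ih.insert 0).insert ({qs | qs.map f = k :: ks} : Language γ)).subset
      (Set.range_subset_iff.2 fun x => ?_)
    rcases x with _ | ⟨q, x⟩
    · exact Or.inl rfl
    · by_cases hkq : f q = k
      · refine Or.inr (Or.inr ⟨x, Language.ext fun y => ?_⟩)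
        change List.map f (x ++ y) = ks ↔ f q :: List.map f (x ++ y) = k :: ks
        rw [hkq, List.cons_inj_right]
      · exact Or.inr (Or.inl (Language.ext fun y =>
          iff_of_false (fun h => hkq (List.cons_eq_cons.1 h).1) id))

theorem List.forall₂_append_left_iff {β γ : Type*} {R : β → γ → Prop} {l₂ : List β}
    {u : List γ} : ∀ {l₁ : List β}, List.Forall₂ R (l₁ ++ l₂) u ↔
      ∃ u₁ u₂, List.Forall₂ R l₁ u₁ ∧ List.Forall₂ R l₂ u₂ ∧ u = u₁ ++ u₂
  | [] => by simp
  | a :: l₁ => by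
    simp only [List.cons_append, List.forall₂_cons_left_iff, List.forall₂_append_left_iff]
    aesop

theorem List.forall₂_iff_eq_of_forall_mem {β : Type*} {R : β → β → Prop} :
    ∀ {l u : List β}, (∀ a ∈ l, ∀ b, R a b ↔ b = a) → (List.Forall₂ R l u ↔ u = l)
  | [], _, _ => List.forall₂_nil_left_iff
  | a :: l, u, h => by
    simp [List.forall₂_cons_left_iff, h a List.mem_cons_self,
      List.forall₂_iff_eq_of_forall_mem fun b hb => h b (List.mem_cons_of_mem a hb)]

theorem List.Forall₂.exists_forall₂_forall₂ {β γ δ : Type*} {R : β → γ → Prop}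
    {S : β → δ → Prop} {T : γ → δ → Prop} {l₁ : List β} {l₂ : List γ}
    (h : List.Forall₂ R l₁ l₂) (H : ∀ a ∈ l₁, ∀ b ∈ l₂, R a b → ∃ c, S a c ∧ T b c) :
    ∃ l₃, List.Forall₂ S l₁ l₃ ∧ List.Forall₂ T l₂ l₃ := by
  induction h with
  | nil => exact ⟨[], .nil, .nil⟩
  | cons hab _ ih =>
    obtain ⟨c, hS, hT⟩ := H _ List.mem_cons_self _ List.mem_cons_self hab
    obtain ⟨l₃, hS', hT'⟩ := ih fun a ha b hb => H a (List.mem_cons_of_mem _ ha) b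
      (List.mem_cons_of_mem _ hb)
    exact ⟨c :: l₃, .cons hS hS', .cons hT hT'⟩

namespace UTerm

variable {α β : Type}

@[induction_eliminator]
theorem induction {motive : UTerm α → Prop}
    (node : ∀ a ts, (∀ t ∈ ts, motive t) → motive (.node a ts)) : ∀ t, motive t
  | .node a ts => node a ts fun t _ => UTerm.induction node t

def map (f : α → β) : UTerm α → UTerm β
  | node a ts => node (f a) (ts.map (map f))

def subterms : UTerm α → List (UTerm α)
  | node a ts => node a ts :: ts.flatMap subterms

theorem mem_subterms_self (t : UTerm α) : t ∈ t.subterms := by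
  cases t; simp [subterms]

theorem mem_subterms_of_mem_of_node_mem {t : UTerm α} {a : α} {ks : List (UTerm α)}
    {k : UTerm α} (h : node a ks ∈ t.subterms) (hk : k ∈ ks) : k ∈ t.subterms := by
  induction t with
  | node b ts ih =>
    simp only [subterms, List.mem_cons, List.mem_flatMap] at h ⊢
    rcases h with h | ⟨t, ht, h⟩
    · cases h
      exact Or.inr ⟨k, hk, mem_subterms_self k⟩
    · exact Or.inr ⟨t, ht, ih t ht h⟩

end UTerm

open UTerm

section Patterns

variable {α P : Type}

theorem HA.reduce_node_iff {Q : Type} {A : HA α Q} {a : α} {ts : List (UTerm α)} {q : Q} :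
    A.Reduce (.node a ts) q ↔
      ∃ L qs, (a, L, q) ∈ A.trans ∧ qs ∈ L ∧ List.Forall₂ A.Reduce ts qs := by
  constructor
  · rintro ⟨htr, hqs, hlen, hred⟩
    exact ⟨_, _, htr, hqs, List.forall₂_iff_zip.2 ⟨hlen, fun h => hred _ h⟩⟩
  · rintro ⟨L, qs, htr, hqs, hred⟩
    exact .node htr hqs hred.length_eq fun _ h => List.forall₂_zip hred h

/-- Patterns are terms over `α ⊕ P`; the leaf `param p` is a placeholder for a term of
`L(A, p)`. -/
def UTerm.param (p : P) : UTerm (α ⊕ P) := .node (.inr p) []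

inductive PatInst (A : HA α P) : UTerm (α ⊕ P) → UTerm α → Prop
  | param {p t} : A.Reduce t p → PatInst A (param p) t
  | node {a ks ts} : List.Forall₂ (PatInst A) ks ts → PatInst A (.node (.inl a) ks) (.node a ts)

variable {A : HA α P}

@[simp]
theorem patInst_param_iff {p : P} {u : UTerm α} : PatInst A (param p) u ↔ A.Reduce u p :=
  ⟨fun h => by cases h; assumption, .param⟩

@[simp]
theorem patInst_node_inl_iff {a : α} {ks : List (UTerm (α ⊕ P))} {u : UTerm α} :
    PatInst A (.node (.inl a) ks) u ↔ ∃ ts, List.Forall₂ (PatInst A) ks ts ∧ u = .node a ts := by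
  constructor
  · rintro ⟨⟩; exact ⟨_, ‹_›, rfl⟩
  · rintro ⟨ts, hts, rfl⟩; exact .node hts

@[simp]
theorem patInst_map_inl_iff {t u : UTerm α} : PatInst A (t.map .inl) u ↔ u = t := by
  induction t generalizing u with
  | node a ts ih => simp [map, List.forall₂_iff_eq_of_forall_mem ih]

@[simp]
theorem forall₂_patInst_map_inl_iff {h h' : List (UTerm α)} :
    List.Forall₂ (PatInst A) (h.map (map .inl)) h' ↔ h' = h := by
  rw [List.forall₂_map_left_iff]
  exact List.forall₂_iff_eq_of_forall_mem fun _ _ _ => patInst_map_inl_iff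

theorem forall₂_patInst_map_param_iff {ps : List P} {ts : List (UTerm α)} :
    List.Forall₂ (PatInst A) (ps.map param) ts ↔ List.Forall₂ A.Reduce ts ps := by
  rw [List.forall₂_map_left_iff]
  exact ⟨fun h => (h.imp fun _ _ => patInst_param_iff.1).flip,
    fun h => h.flip.imp fun _ _ => patInst_param_iff.2⟩

theorem forall₂_patInst_append_map_inl_iff {σ : List (UTerm (α ⊕ P))}
    {v h' : List (UTerm α)} :
    List.Forall₂ (PatInst A) (σ ++ v.map (map .inl)) h' ↔
      ∃ w, List.Forall₂ (PatInst A) σ w ∧ h' = w ++ v := by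
  simp [List.forall₂_append_left_iff, -List.forall₂_map_left_iff]

end Patterns

section PatternAutomaton

variable {α P : Type} (A : HA α P) (subs : List (UTerm (α ⊕ P)))

abbrev PatState := P ⊕ {σ // σ ∈ subs}

/-- The state `.inl p` recognises `L(A, p)`, i.e. the instances of `param p`. -/
def PatState.pattern : PatState subs → UTerm (α ⊕ P) := Sum.elim param Subtype.val

def patTrans (τ : {σ // σ ∈ subs}) : Option (α × Language (PatState subs) × PatState subs) :=
  match τ.1 with
  | .node (.inl a) ks => some (a, {qs | qs.map (PatState.pattern subs) = ks}, .inr τ)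
  | .node (.inr _) _ => none

def patHA (S : Set (UTerm (α ⊕ P))) : HA α (PatState subs) where
  final := {q | q.pattern ∈ S}
  trans := A.trans.map (fun r => (r.1, Language.map .inl r.2.1, .inl r.2.2)) ++
    subs.attach.filterMap (patTrans subs)
  regular := by
    simp only [List.mem_append, List.mem_map, List.mem_filterMap]
    rintro r (⟨r, hr, rfl⟩ | ⟨τ, -, hτ⟩)
    · exact (A.regular r hr).map Sum.inl_injective
    · unfold patTrans at hτ
      split at hτ
      · cases hτ; exact Language.isRegular_setOf_map_eq _ _
      · cases hτ

variable {A subs} {S : Set (UTerm (α ⊕ P))}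

theorem mem_patHA_trans {a : α} {L : Language (PatState subs)} {q : PatState subs} :
    (a, L, q) ∈ (patHA A subs S).trans ↔
      (∃ L₀ q₀, (a, L₀, q₀) ∈ A.trans ∧ L = Language.map .inl L₀ ∧ q = .inl q₀) ∨
      ∃ τ ks, τ.1 = .node (.inl a) ks ∧ L = {qs | qs.map (PatState.pattern subs) = ks} ∧
        q = .inr τ := by
  simp only [patHA, List.mem_append, List.mem_map, List.mem_filterMap, List.mem_attach,
    true_and, Prod.mk.injEq]
  refine or_congr ⟨?_, ?_⟩ ⟨?_, ?_⟩
  · rintro ⟨⟨a, L₀, q₀⟩, hr, rfl, rfl, rfl⟩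
    exact ⟨L₀, q₀, hr, rfl, rfl⟩
  · rintro ⟨L₀, q₀, hr, rfl, rfl⟩
    exact ⟨_, hr, rfl, rfl, rfl⟩
  · rintro ⟨τ, hτ⟩
    unfold patTrans at hτ
    split at hτ
    · next ks h => cases hτ; exact ⟨τ, ks, h, rfl, rfl⟩
    · cases hτ
  · rintro ⟨τ, ks, h, rfl, rfl⟩
    refine ⟨τ, ?_⟩
    unfold patTrans
    split <;> simp_all

theorem patInst_of_reduce_patHA {u : UTerm α} {q : PatState subs}
    (h : (patHA A subs S).Reduce u q) : PatInst A q.pattern u := by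
  induction h with
  | @node a ts qs L q htr hqs hlen _ ih =>
    have hts : List.Forall₂ (fun t q => PatInst A (PatState.pattern subs q) t) ts qs :=
      List.forall₂_iff_zip.2 ⟨hlen, fun h => ih _ h⟩
    rcases mem_patHA_trans.1 htr with ⟨L₀, q₀, hr, rfl, rfl⟩ | ⟨τ, ks, hτ, rfl, rfl⟩
    · obtain ⟨vs, hvs, rfl⟩ := hqs
      simp only [PatState.pattern, List.forall₂_map_right_iff, Sum.elim_inl,
        patInst_param_iff] at hts
      exact patInst_param_iff.2 (HA.reduce_node_iff.2 ⟨L₀, vs, hr, hvs, hts⟩)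
    · have hks : qs.map (PatState.pattern subs) = ks := hqs
      simp only [PatState.pattern, Sum.elim_inr, hτ, ← hks, patInst_node_inl_iff]
      exact ⟨ts, List.forall₂_map_left_iff.2 hts.flip, rfl⟩

theorem reduce_patHA_of_reduce {u : UTerm α} {p : P} (h : A.Reduce u p) :
    (patHA A subs S).Reduce u (.inl p) := by
  induction h with
  | @node a ts qs L q htr hqs hlen _ ih =>
    refine .node (mem_patHA_trans.2 (.inl ⟨L, q, htr, rfl, rfl⟩)) ⟨qs, hqs, rfl⟩
      (by simpa using hlen) ?_
    simp only [List.zip_map_right, List.mem_map]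
    rintro _ ⟨pr, hpr, rfl⟩
    exact ih pr hpr

theorem exists_reduce_patHA_of_patInst
    (hsubs : ∀ a ks, .node (.inl a) ks ∈ subs → ∀ k ∈ ks, k ∈ subs)
    {σ : UTerm (α ⊕ P)} {u : UTerm α} (h : PatInst A σ u) (hσ : σ ∈ subs) :
    ∃ q : PatState subs, q.pattern = σ ∧ (patHA A subs S).Reduce u q := by
  induction u generalizing σ with
  | node a ts ih =>
    cases h with
    | param hp => exact ⟨.inl _, rfl, reduce_patHA_of_reduce hp⟩
    | @node _ ks _ hks =>
      obtain ⟨qs, hqs, hred⟩ := hks.exists_forall₂_forall₂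
        (S := fun k q => k = PatState.pattern subs q) (T := (patHA A subs S).Reduce)
        fun k hk t ht hkt => (ih t ht hkt (hsubs _ _ hσ k hk)).imp fun _ h => ⟨h.1.symm, h.2⟩
      rw [← List.forall₂_map_right_iff, List.forall₂_eq_eq_eq] at hqs
      exact ⟨.inr ⟨_, hσ⟩, rfl, HA.reduce_node_iff.2
        ⟨_, qs, mem_patHA_trans.2 (.inr ⟨_, _, rfl, rfl, rfl⟩), hqs.symm, hred⟩⟩

theorem patHA_lang (hsubs : ∀ a ks, .node (.inl a) ks ∈ subs → ∀ k ∈ ks, k ∈ subs)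
    (hS : ∀ σ ∈ S, σ ∈ subs) : (patHA A subs S).lang = {u | ∃ σ ∈ S, PatInst A σ u} := by
  ext u
  constructor
  · rintro ⟨q, hq, hu⟩
    exact ⟨_, hq, patInst_of_reduce_patHA hu⟩
  · rintro ⟨σ, hσ, hu⟩
    obtain ⟨q, rfl, hq⟩ := exists_reduce_patHA_of_patInst hsubs hu (hS σ hσ)
    exact ⟨q, hσ, hq⟩

theorem isHALang_setOf_patInst [Fintype P] (A : HA α P) {S : Set (UTerm (α ⊕ P))}
    (hS : S.Finite) : IsHALang {u | ∃ σ ∈ S, PatInst A σ u} := by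
  classical
  obtain ⟨s, rfl⟩ := hS.exists_finset_coe
  refine ⟨_, inferInstance, patHA A (s.toList.flatMap subterms) s, patHA_lang ?_ ?_⟩
  · simp only [List.mem_flatMap]
    rintro a ks ⟨σ, hσ, h⟩ k hk
    exact ⟨σ, hσ, mem_subterms_of_mem_of_node_mem h hk⟩
  · exact fun σ hσ => List.mem_flatMap.2 ⟨σ, by simpa using hσ, mem_subterms_self σ⟩

end PatternAutomaton

section Rewriting

variable {α P : Type}

namespace XPRule

def lhs : XPRule α P → α
  | ren a _ | insFirst a _ _ | insLast a _ _ | insInto a _ | insLeft a _ | insRight a _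
  | rpl a _ | delS a => a

def rhsPats (g : List (UTerm α)) : XPRule α P → List (List (UTerm (α ⊕ P)))
  | ren _ b => [[.node (.inl b) (g.map (map .inl))]]
  | insFirst _ b p => [[.node (.inl b) (param p :: g.map (map .inl))]]
  | insLast _ b p => [[.node (.inl b) (g.map (map .inl) ++ [param p])]]
  | insInto a p => (List.range (g.length + 1)).map fun n =>
      [.node (.inl a) ((g.take n).map (map .inl) ++ param p :: (g.drop n).map (map .inl))]
  | insLeft a p => [[param p, .node (.inl a) (g.map (map .inl))]]
  | insRight a p => [[.node (.inl a) (g.map (map .inl)), param p]]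
  | rpl _ ps => [ps.map param]
  | delS _ => [g.map (map .inl)]

end XPRule

variable {A : HA α P} {R : List (XPRule α P)}

theorem xpStep_iff {r : XPRule α P} {l h' : List (UTerm α)} :
    XPStep A r l h' ↔
      ∃ g, l = [.node r.lhs g] ∧ ∃ π ∈ r.rhsPats g, List.Forall₂ (PatInst A) π h' := by
  constructor
  · intro h
    cases h with
    | @insInto a p t x y ht =>
      refine ⟨_, rfl, _, List.mem_map.2 ⟨x.length, by simp, rfl⟩, ?_⟩
      simp [ht, List.forall₂_cons_left_iff, List.forall₂_append_left_iff,
        -List.forall₂_map_left_iff]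
    | rpl hlen hred =>
      exact ⟨_, rfl, _, List.mem_singleton_self _,
        forall₂_patInst_map_param_iff.2 (List.forall₂_iff_zip.2 ⟨hlen, hred _⟩)⟩
    | _ => simp [*, XPRule.lhs, XPRule.rhsPats, List.forall₂_cons_left_iff,
        List.forall₂_append_left_iff, -List.forall₂_map_left_iff]
  · rintro ⟨g, rfl, hπ⟩
    cases r <;> simp only [XPRule.rhsPats, List.mem_singleton, List.mem_map, List.mem_range,
      Order.lt_add_one_iff, exists_exists_and_eq_and, exists_eq_left, exists_and_left,
      ↓existsAndEq, true_and, and_true, List.forall₂_cons_left_iff, List.forall₂_append_left_iff,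
      List.forall₂_nil_left_iff, patInst_node_inl_iff, patInst_param_iff,
      forall₂_patInst_map_inl_iff, forall₂_patInst_map_param_iff] at hπ
    case ren => exact hπ ▸ .ren
    case insFirst => obtain ⟨t, ht, rfl⟩ := hπ; exact .insFirst ht
    case insLast => obtain ⟨t, ht, rfl⟩ := hπ; exact .insLast ht
    case insInto a p =>
      obtain ⟨n, -, t, ht, rfl⟩ := hπ
      simpa only [XPRule.lhs, List.take_append_drop] using
        XPStep.insInto (a := a) (x := g.take n) (y := g.drop n) ht
    case insLeft => obtain ⟨t, ht, rfl⟩ := hπ; exact .insLeft ht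
    case insRight => obtain ⟨t, ht, rfl⟩ := hπ; exact .insRight ht
    case rpl => exact .rpl hπ.length_eq fun _ h => List.forall₂_zip hπ h
    case delS => exact hπ ▸ .delS

variable (A R) in
def XPTreeRw (s : UTerm α) (w : List (UTerm α)) : Prop :=
  (∃ r ∈ R, XPStep A r [s] w) ∨ ∃ a g g', s = .node a g ∧ XPRw A R g g' ∧ w = [.node a g']

theorem XPTreeRw.xprw {s : UTerm α} {w : List (UTerm α)} (h : XPTreeRw A R s w) :
    XPRw A R [s] w := by
  rcases h with ⟨r, hr, hs⟩ | ⟨a, g, g', rfl, hg, rfl⟩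
  · exact .base hr hs
  · exact .under hg

theorem xpTreeRw_node_iff {a : α} {g w : List (UTerm α)} :
    XPTreeRw A R (.node a g) w ↔
      (∃ r ∈ R, r.lhs = a ∧ ∃ π ∈ r.rhsPats g, List.Forall₂ (PatInst A) π w) ∨
        ∃ g', XPRw A R g g' ∧ w = [.node a g'] := by
  simp [XPTreeRw, xpStep_iff, eq_comm]

theorem xprw_iff_exists_xpTreeRw {h h' : List (UTerm α)} :
    XPRw A R h h' ↔ ∃ u s v w, h = u ++ s :: v ∧ h' = u ++ w ++ v ∧ XPTreeRw A R s w := by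
  constructor
  · intro hrw
    induction hrw with
    | base hr hs =>
      obtain ⟨g, rfl, -⟩ := xpStep_iff.1 hs
      exact ⟨[], _, [], _, rfl, by simp, .inl ⟨_, hr, hs⟩⟩
    | @context u₀ v₀ _ _ _ ih =>
      obtain ⟨u, s, v, w, rfl, rfl, hsw⟩ := ih
      exact ⟨u₀ ++ u, s, v ++ v₀, w, by simp, by simp, hsw⟩
    | under hrw _ => exact ⟨[], _, [], _, rfl, rfl, .inr ⟨_, _, _, rfl, hrw, rfl⟩⟩
  · rintro ⟨u, s, v, w, rfl, rfl, hsw⟩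
    simpa using XPRw.context (u := u) (v := v) hsw.xprw

theorem not_xprw_nil {h' : List (UTerm α)} : ¬ XPRw A R [] h' := by
  simp [xprw_iff_exists_xpTreeRw]

theorem xprw_cons_iff {s : UTerm α} {v h' : List (UTerm α)} :
    XPRw A R (s :: v) h' ↔
      (∃ w, XPTreeRw A R s w ∧ h' = w ++ v) ∨ ∃ v', XPRw A R v v' ∧ h' = s :: v' := by
  simp only [xprw_iff_exists_xpTreeRw (h := s :: v), xprw_iff_exists_xpTreeRw (h := v)]
  constructor
  · rintro ⟨_ | ⟨s₀, u⟩, s', v', w, hsv, rfl, hsw⟩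
    · simp only [List.nil_append, List.cons.injEq] at hsv
      obtain ⟨rfl, rfl⟩ := hsv
      exact .inl ⟨w, hsw, rfl⟩
    · simp only [List.cons_append, List.cons.injEq] at hsv
      obtain ⟨rfl, rfl⟩ := hsv
      exact .inr ⟨_, ⟨u, s', v', w, rfl, rfl, hsw⟩, by simp⟩
  · rintro (⟨w, hsw, rfl⟩ | ⟨_, ⟨u, s', v', w, rfl, rfl, hsw⟩, rfl⟩)
    · exact ⟨[], s, v, w, rfl, rfl, hsw⟩
    · exact ⟨s :: u, s', v', w, rfl, by simp, hsw⟩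

variable (R) in
open Classical in
noncomputable def succPats : List (UTerm α) → List (List (UTerm (α ⊕ P)))
  | [] => []
  | .node a g :: v =>
      (((R.filter fun r => r.lhs = a).flatMap (XPRule.rhsPats g) ++
          (succPats g).map fun π => [UTerm.node (.inl a) π]).map (· ++ v.map (map .inl))) ++
        (succPats v).map (UTerm.node (.inl a) (g.map (map .inl)) :: ·)

theorem xprw_iff_exists_succPats :
    ∀ {h h' : List (UTerm α)}, XPRw A R h h' ↔ ∃ π ∈ succPats R h, List.Forall₂ (PatInst A) π h'
  | [], _ => by simp [succPats, not_xprw_nil]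
  | .node a g :: v, h' => by
    simp only [xprw_cons_iff, xpTreeRw_node_iff, succPats, @xprw_iff_exists_succPats g,
      @xprw_iff_exists_succPats v]
    simp only [List.mem_append, List.mem_map, List.mem_flatMap, List.mem_filter,
      decide_eq_true_eq, or_and_right, exists_or, ↓existsAndEq, exists_and_left, exists_eq_left,
      true_and, and_true, Function.comp_apply, List.cons_append, List.nil_append, List.map_append,
      List.map_map, List.append_assoc, forall₂_patInst_append_map_inl_iff,
      List.forall₂_cons_left_iff, patInst_node_inl_iff, forall₂_patInst_map_inl_iff]
    aesop

end Rewriting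

theorem xacup_one_step_isHALang_general {α : Type} {P : Type} [Fintype P]
    (A : HA α P) (R : List (XPRule α P)) (t : UTerm α) :
    IsHALang { u : UTerm α | XPRw A R [t] [u] } := by
  have hfin : {σ | [σ] ∈ succPats R [t]}.Finite :=
    (List.finite_toSet _).preimage List.singleton_injective.injOn
  convert isHALang_setOf_patInst A hfin using 1
  ext u
  simp [xprw_iff_exists_succPats, List.forall₂_cons_right_iff]

/-- the one-step successor set of a single term under an XACU+
parametrized rewrite system is a hedge-automaton language. -/
theorem xacup_one_step_isHALang {α : Type} [Fintype α] {P : Type} [Fintype P]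
    (A : HA α P) (R : List (XPRule α P)) (t : UTerm α) :
    IsHALang { u : UTerm α | XPRw A R [t] [u] } :=
  xacup_one_step_isHALang_general A R t
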